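/- Let M be a regular 0-1 matrix that is not totally balanced, so that (after permutation) M(1,1) = M(1,2) = M(2,1) = 1 and M(2,2) = 0. Then two terms p, q over the combinatorial Rees matrix semigroup S_M are equal as functions if and only if G(p) = G(q), the leftmost variables of p and q coincide, and the rightmost variables of p and q coincide. -/

import Mathlib

/-- Multiplication in a combinatorial Rees matrix semigroup `S_M` with 0-1 structure
matrix `M` (zero modeled as `none`). -/
def cmul {I Λ : Type} (M : Λ → I → Bool) :
    Option (I × Λ) → Option (I × Λ) → Option (I × Λ)
  | some (i, l), some (j, c) => if M l j then some (i, c) else none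
  | _, _ => none

/-- Product of a nonempty list. -/
def prodWith {α : Type} (f : α → α → α) : List α → Option α
  | [] => none
  | a :: t => some (t.foldl f a)

/-- `a`, `b` occur as a consecutive pair in the word `w` (an edge of `G(w)`). -/
def consec {α : Type} (w : List α) (a b : α) : Prop :=
  ∃ l₁ l₂ : List α, w = l₁ ++ a :: b :: l₂

/-!
A valuation sending some variable to `0` kills every term containing it. Any other valuation
sends a term to `[i, λ]`, with `i` the row of its leftmost variable and `λ` the column of its
rightmost one, if `M(λ', j') = 1` for every edge `xy` of its graph with `x ↦ [_, λ']`,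
`y ↦ [j', _]`, and to `0` otherwise. So the term function only depends on the content, the
graph and the two end variables. Conversely the pattern `M(α,i) = M(α,j) = M(β,i) = 1`,
`M(β,j) = 0` yields valuations separating terms that differ in any of these data.
-/

lemma List.isChain_iff_consec {V : Type} {R : V → V → Prop} {w : List V} :
    w.IsChain R ↔ ∀ x y, consec w x y → R x y := by
  rw [List.isChain_iff_forall_rel_of_append_cons_cons]
  exact ⟨fun h x y ⟨l₁, l₂, hw⟩ => h hw, fun h x y l₁ l₂ hw => h x y ⟨l₁, l₂, hw⟩⟩

section ReesMatrix

variable {I Λ : Type} (M : Λ → I → Bool)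

@[simp]
lemma cmul_none_left (b : Option (I × Λ)) : cmul M none b = none := by
  cases b <;> rfl

@[simp]
lemma cmul_none_right (a : Option (I × Λ)) : cmul M a none = none := by
  rcases a with _ | ⟨_, _⟩ <;> rfl

lemma cmul_some_some (a b : I × Λ) :
    cmul M (some a) (some b) = if M a.2 b.1 then some (a.1, b.2) else none :=
  rfl

lemma foldl_cmul_eq_none_of_mem (a : Option (I × Λ)) (l : List (Option (I × Λ)))
    (h : none ∈ a :: l) : l.foldl (cmul M) a = none := by
  induction l generalizing a with
  | nil => exact (List.mem_singleton.1 h).symm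
  | cons b l ih =>
    refine ih _ ?_
    rcases h with _ | ⟨_, _ | ⟨_, h⟩⟩
    · simp
    · simp
    · exact List.mem_cons_of_mem _ h

lemma foldl_cmul_map_some (c : I) (a : I × Λ) (l : List (I × Λ)) :
    (l.map some).foldl (cmul M) (some (c, a.2)) =
      if (a :: l).IsChain (fun x y => M x.2 y.1) then
        some (c, ((a :: l).getLast (List.cons_ne_nil a l)).2)
      else none := by
  induction l generalizing a with
  | nil => simp
  | cons b l ih =>
    simp only [List.map_cons, List.foldl_cons, cmul_some_some, List.isChain_cons_cons,
      List.getLast_cons (List.cons_ne_nil b l)]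
    by_cases hab : M a.2 b.1 = true
    · simpa [hab] using ih b
    · simp [hab, foldl_cmul_eq_none_of_mem M none _ List.mem_cons_self]

variable {V : Type}

lemma prodWith_cmul_map_eq_some_none_of_mem (e : V → Option (I × Λ)) {w : List V} {v : V}
    (hv : v ∈ w) (hev : e v = none) : prodWith (cmul M) (w.map e) = some none := by
  cases w with
  | nil => cases hv
  | cons hd t =>
    refine congrArg some (foldl_cmul_eq_none_of_mem M _ _ ?_)
    rw [← hev, ← List.map_cons]
    exact List.mem_map_of_mem hv

lemma prodWith_cmul_map_of_forall_eq_some (e : V → Option (I × Λ)) (φ : V → I × Λ)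
    (hd : V) (t : List V) (he : ∀ v ∈ hd :: t, e v = some (φ v)) :
    prodWith (cmul M) ((hd :: t).map e) =
      some (if ((hd :: t).map φ).IsChain (fun x y => M x.2 y.1) then
        some ((φ hd).1, (φ ((hd :: t).getLast (List.cons_ne_nil hd t))).2)
      else none) := by
  have h := foldl_cmul_map_some M (φ hd).1 (φ hd) (t.map φ)
  have hlast : (φ hd :: t.map φ).getLast (List.cons_ne_nil _ _) =
      φ ((hd :: t).getLast (List.cons_ne_nil hd t)) :=
    List.getLast_map (l := hd :: t) (List.cons_ne_nil _ _)
  rw [hlast, List.map_map] at h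
  rw [List.map_congr_left he]
  exact congrArg some h

lemma prodWith_cmul_map_of_forall_linked (e : V → Option (I × Λ)) (φ : V → I × Λ)
    (hd : V) (t : List V) (he : ∀ v ∈ hd :: t, e v = some (φ v))
    (hφ : ∀ x y, M (φ x).2 (φ y).1 = true) :
    prodWith (cmul M) ((hd :: t).map e) =
      some (some ((φ hd).1, (φ ((hd :: t).getLast (List.cons_ne_nil hd t))).2)) := by
  rw [prodWith_cmul_map_of_forall_eq_some M e φ hd t he,
    if_pos ((List.isChain_map φ).2 (List.isChain_iff_consec.2 fun x y _ => hφ x y))]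

lemma prodWith_cmul_map_eq_of_graph_eq {ph qh : V} {pt qt : List V}
    (hmem : ∀ v, v ∈ ph :: pt ↔ v ∈ qh :: qt)
    (hcon : ∀ x y, consec (ph :: pt) x y ↔ consec (qh :: qt) x y) (hhead : ph = qh)
    (hlast : (ph :: pt).getLast (List.cons_ne_nil ph pt) =
      (qh :: qt).getLast (List.cons_ne_nil qh qt))
    (e : V → Option (I × Λ)) :
    prodWith (cmul M) ((ph :: pt).map e) = prodWith (cmul M) ((qh :: qt).map e) := by
  subst hhead
  by_cases hzero : ∃ v ∈ ph :: pt, e v = none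
  · obtain ⟨v, hv, hev⟩ := hzero
    rw [prodWith_cmul_map_eq_some_none_of_mem M e hv hev,
      prodWith_cmul_map_eq_some_none_of_mem M e ((hmem v).1 hv) hev]
  · push Not at hzero
    obtain ⟨a, -⟩ := Option.ne_none_iff_exists'.1 (hzero ph List.mem_cons_self)
    have he : ∀ v ∈ ph :: pt, e v = some ((e v).getD a) := fun v hv =>
      (Option.getD_of_ne_none (hzero v hv) a).symm
    rw [prodWith_cmul_map_of_forall_eq_some M e _ ph pt he,
      prodWith_cmul_map_of_forall_eq_some M e _ ph qt (fun v hv => he v ((hmem v).2 hv))]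
    have hchain : ∀ φ : V → I × Λ, ((ph :: pt).map φ).IsChain (fun x y => M x.2 y.1) ↔
        ((ph :: qt).map φ).IsChain (fun x y => M x.2 y.1) := by
      intro φ
      rw [List.isChain_map, List.isChain_map, List.isChain_iff_consec, List.isChain_iff_consec]
      simp only [hcon]
    simp only [hchain, hlast]

section Separation

variable {ph qh : V} {pt qt : List V}

lemma mem_of_forall_prodWith_cmul_map_eq {a : I × Λ} (ha : M a.2 a.1 = true)
    (H : ∀ e : V → Option (I × Λ),
      prodWith (cmul M) ((ph :: pt).map e) = prodWith (cmul M) ((qh :: qt).map e))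
    {v : V} (hv : v ∈ ph :: pt) : v ∈ qh :: qt := by
  classical
  by_contra hvq
  let e : V → Option (I × Λ) := fun u => if u = v then none else some a
  have hp := prodWith_cmul_map_eq_some_none_of_mem M e hv (if_pos rfl)
  rw [H e, prodWith_cmul_map_of_forall_linked M e (fun _ => a) qh qt
    (fun u hu => if_neg (by rintro rfl; exact hvq hu)) (fun _ _ => ha)] at hp
  cases hp

lemma head_eq_of_forall_prodWith_cmul_map_eq {α : Λ} {i j : I} (hi : M α i = true)
    (hj : M α j = true) (hij : i ≠ j)
    (H : ∀ e : V → Option (I × Λ),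
      prodWith (cmul M) ((ph :: pt).map e) = prodWith (cmul M) ((qh :: qt).map e)) :
    ph = qh := by
  classical
  by_contra hne
  let φ : V → I × Λ := fun v => (if v = ph then j else i, α)
  have hφ : ∀ x y, M (φ x).2 (φ y).1 = true := fun _ y => by
    dsimp only [φ]; split_ifs <;> assumption
  have h := H (fun v => some (φ v))
  rw [prodWith_cmul_map_of_forall_linked M _ φ ph pt (fun _ _ => rfl) hφ,
    prodWith_cmul_map_of_forall_linked M _ φ qh qt (fun _ _ => rfl) hφ] at h
  simp [φ, Ne.symm hne] at h
  exact hij h.symm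

lemma getLast_eq_of_forall_prodWith_cmul_map_eq {α β : Λ} {i : I} (hα : M α i = true)
    (hβ : M β i = true) (hαβ : α ≠ β)
    (H : ∀ e : V → Option (I × Λ),
      prodWith (cmul M) ((ph :: pt).map e) = prodWith (cmul M) ((qh :: qt).map e)) :
    (ph :: pt).getLast (List.cons_ne_nil ph pt) = (qh :: qt).getLast (List.cons_ne_nil qh qt) := by
  classical
  by_contra hne
  let φ : V → I × Λ := fun v => (i, if v = (ph :: pt).getLast (List.cons_ne_nil ph pt) then β else α)
  have hφ : ∀ x y, M (φ x).2 (φ y).1 = true := fun x _ => by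
    dsimp only [φ]; split_ifs <;> assumption
  have h := H (fun v => some (φ v))
  rw [prodWith_cmul_map_of_forall_linked M _ φ ph pt (fun _ _ => rfl) hφ,
    prodWith_cmul_map_of_forall_linked M _ φ qh qt (fun _ _ => rfl) hφ] at h
  simp [φ, Ne.symm hne] at h
  exact hαβ h.symm

/-- The valuation `x ↦ [i, β]`, `y ↦ [j, α]`, everything else `↦ [i, α]` (with `x ↦ [j, β]`
if `x = y`) vanishes on a word exactly when `xy` is a factor of it, since `M(β, j) = 0` is the
only missing link. -/
lemma consec_iff_of_forall_prodWith_cmul_map_eq {α β : Λ} {i j : I} (h1 : M α i = true)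
    (h2 : M α j = true) (h3 : M β i = true) (h4 : M β j = false)
    (H : ∀ e : V → Option (I × Λ),
      prodWith (cmul M) ((ph :: pt).map e) = prodWith (cmul M) ((qh :: qt).map e))
    (x y : V) : consec (ph :: pt) x y ↔ consec (qh :: qt) x y := by
  classical
  let φ : V → I × Λ := fun v => (if v = y then j else i, if v = x then β else α)
  have hlink : ∀ a b, M (φ a).2 (φ b).1 = true ↔ ¬(a = x ∧ b = y) := fun a b => by
    by_cases ha : a = x <;> by_cases hb : b = y <;> simp [φ, ha, hb, h1, h2, h3, h4]
  have hzero : ∀ hd t, prodWith (cmul M) ((hd :: t).map (fun v => some (φ v))) = some none ↔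
      consec (hd :: t) x y := fun hd t => by
    rw [prodWith_cmul_map_of_forall_eq_some M _ φ hd t (fun _ _ => rfl)]
    split_ifs with hc <;> rw [List.isChain_map, List.isChain_iff_consec] at hc
    · simpa using fun hxy => (hlink x y).1 (hc x y hxy) ⟨rfl, rfl⟩
    · refine iff_of_true rfl (by_contra fun hxy => hc fun a b hab => (hlink a b).2 ?_)
      rintro ⟨rfl, rfl⟩
      exact hxy hab
  rw [← hzero, H, hzero]

end Separation

end ReesMatrix

/-- Let `M` be a regular 0-1 matrix that is not totally balanced, witnessed (after
permutation) by rows `α ≠ β` and columns `i ≠ j` with `M α i = M α j = M β i = 1`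
and `M β j = 0`.  Two terms `p, q` over `S_M` are equal iff `G(p) = G(q)` (same
occurring variables and same edges), their leftmost variables coincide, and their
rightmost variables coincide. -/
theorem stmt17 (Λ I V : Type) (M : Λ → I → Bool)
    (α β : Λ) (i j : I) (hαβ : α ≠ β) (hij : i ≠ j)
    (h1 : M α i = true) (h2 : M α j = true) (h3 : M β i = true)
    (h4 : M β j = false)
    (ph : V) (pt : List V) (qh : V) (qt : List V) :
    (∀ e : V → Option (I × Λ),
        prodWith (cmul M) ((ph :: pt).map e) = prodWith (cmul M) ((qh :: qt).map e)) ↔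
    ((∀ v : V, v ∈ ph :: pt ↔ v ∈ qh :: qt) ∧
     (∀ x y : V, consec (ph :: pt) x y ↔ consec (qh :: qt) x y) ∧
     ph = qh ∧
     (ph :: pt).getLast (by simp) = (qh :: qt).getLast (by simp)) := by
  refine ⟨fun H => ⟨fun v => ⟨?_, ?_⟩, ?_, ?_, ?_⟩, fun ⟨hmem, hcon, hhead, hlast⟩ =>
    prodWith_cmul_map_eq_of_graph_eq M hmem hcon hhead hlast⟩
  · exact mem_of_forall_prodWith_cmul_map_eq M (a := (i, α)) h1 H
  · exact mem_of_forall_prodWith_cmul_map_eq M (a := (i, α)) h1 fun e => (H e).symm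
  · exact consec_iff_of_forall_prodWith_cmul_map_eq M h1 h2 h3 h4 H
  · exact head_eq_of_forall_prodWith_cmul_map_eq M h1 h2 hij H
  · exact getLast_eq_of_forall_prodWith_cmul_map_eq M h1 h3 hαβ H
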